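/- The Moser Spindle M has 7 vertices and 11 edges, admits a (7,2)-colouring (a homomorphism to G_{7,2}), and for all positive integers p, q with 2q ≤ p and 2p < 7q, M admits no (p,q)-colouring. (In particular, M has no proper 3-colouring, and the circular chromatic number of M equals 7/2.) -/

import Mathlib

open SimpleGraph

/-- The circular clique `G_{p,q}` on vertex set `ZMod p`. -/
def circClique (p q : ℕ) : SimpleGraph (ZMod p) where
  Adj i j := i ≠ j ∧ (q ≤ (i - j).val ∧ (i - j).val ≤ p - q)
    ∧ (q ≤ (j - i).val ∧ (j - i).val ≤ p - q)
  symm := ⟨fun _ _ ⟨h, h1, h2⟩ => ⟨h.symm, h2, h1⟩⟩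
  loopless := ⟨fun _ h => h.1 rfl⟩

/-- `G` admits a `(p,q)`-circular colouring. -/
def HasCircColoring {V : Type*} (G : SimpleGraph V) (p q : ℕ) : Prop :=
  Nonempty (G →g circClique p q)

/-- A graph is 4-critical. -/
def FourCritical {V : Type*} (G : SimpleGraph V) : Prop :=
  ¬ G.Colorable 3 ∧ ∀ e ∈ G.edgeSet, (G.deleteEdges {e}).Colorable 3

/-- The wheel on `n` vertices: a cycle on `n-1` vertices plus a hub. -/
def wheel (n : ℕ) : SimpleGraph (Option (Fin (n - 1))) where
  Adj u v := match u, v with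
    | none, none => False
    | none, some _ => True
    | some _, none => True
    | some i, some j => (cycleGraph (n - 1)).Adj i j
  symm := ⟨by rintro (_|i) (_|j) h <;> simp_all <;> exact h.symm⟩
  loopless := ⟨by rintro (_|i) h <;> simp_all⟩

/-- The Moser spindle, with `a,…,g` encoded as `0,…,6`. -/
def moserSpindle : SimpleGraph (Fin 7) :=
  SimpleGraph.fromEdgeSet
    {s(0, 1), s(0, 2), s(0, 5), s(0, 6), s(1, 2), s(1, 3),
     s(2, 3), s(3, 4), s(4, 5), s(4, 6), s(5, 6)}

/-!
Measure distances in `ZMod p` circularly, `‖a - b‖ := (a - b).valMinAbs.natAbs`; then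
adjacency in `G_{p,q}` means `‖a - b‖ ≥ q`. If `p < 4q`, the two tips of a diamond (two
triangles sharing an edge `xy`) are at distance at most `p - 3q`: placing one tip at `0`,
the other tip must avoid the short arc between `x` and `y`, and both tips lie in the arc of
length at most `p - 3q` at distance `≥ q` from `x` and `y`. The spindle consists of two
diamonds with tips `a,d` and `a,e`, so `‖d - e‖ ≤ 2(p - 3q) < q` when `2p < 7q`, although
`de` is an edge.
-/

lemma ZMod.natAbs_valMinAbs_sub_le {n : ℕ} (a b c : ZMod n) :
    (a - c).valMinAbs.natAbs ≤ (a - b).valMinAbs.natAbs + (b - c).valMinAbs.natAbs := by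
  have h := natAbs_valMinAbs_add_le (a - b) (b - c)
  rw [sub_add_sub_cancel] at h
  exact h.trans (Int.natAbs_add_le _ _)

namespace circClique

variable {p q : ℕ}

lemma adj_sub_right {i j : ZMod p} (c : ZMod p) :
    (circClique p q).Adj (i - c) (j - c) ↔ (circClique p q).Adj i j := by
  simp only [circClique, sub_sub_sub_cancel_right, ne_eq, sub_left_inj]

variable [NeZero p]

lemma adj_iff (hq : 0 < q) {i j : ZMod p} :
    (circClique p q).Adj i j ↔ q ≤ (i - j).valMinAbs.natAbs := by
  rw [ZMod.valMinAbs_natAbs_eq_min]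
  change i ≠ j ∧ _ ∧ _ ↔ _
  rw [← neg_sub i j, ZMod.neg_val, ← sub_ne_zero]
  have := (i - j).val_lt
  split_ifs with h
  · simp [h, hq.ne']
  · simp only [h, ne_eq, not_false_eq_true, true_and]
    omega

lemma adj_iff_of_val_le (hq : 0 < q) {i j : ZMod p} (h : i.val ≤ j.val) :
    (circClique p q).Adj i j ↔ q ≤ j.val - i.val ∧ j.val - i.val ≤ p - q := by
  rw [adj_iff hq, ← ZMod.natAbs_valMinAbs_neg, neg_sub, ZMod.valMinAbs_natAbs_eq_min,
    ZMod.val_sub h]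
  have := j.val_lt
  omega

lemma natAbs_valMinAbs_le_of_diamond_zero (hq : 0 < q) (hp : p < 4 * q) {v x y : ZMod p}
    (hxy : (circClique p q).Adj x y) (hx : (circClique p q).Adj 0 x)
    (hy : (circClique p q).Adj 0 y) (hvx : (circClique p q).Adj v x)
    (hvy : (circClique p q).Adj v y) : v.valMinAbs.natAbs ≤ p - 3 * q := by
  wlog hle : x.val ≤ y.val generalizing x y
  · exact this hxy.symm hy hx hvy hvx (le_of_not_ge hle)
  rw [adj_iff_of_val_le hq hle] at hxy
  rw [adj_iff_of_val_le hq (by simp), ZMod.val_zero, Nat.sub_zero] at hx hy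
  rw [ZMod.valMinAbs_natAbs_eq_min]
  have := y.val_lt
  rcases le_total v.val x.val with hvx' | hxv
  · have := (adj_iff_of_val_le hq hvx').1 hvx
    omega
  rcases le_total v.val y.val with hvy' | hyv
  · have := (adj_iff_of_val_le hq hxv).1 hvx.symm
    have := (adj_iff_of_val_le hq hvy').1 hvy
    omega
  · have := (adj_iff_of_val_le hq hyv).1 hvy.symm
    omega

lemma natAbs_valMinAbs_sub_le_of_diamond (hq : 0 < q) (hp : p < 4 * q) {u v x y : ZMod p}
    (hxy : (circClique p q).Adj x y) (hux : (circClique p q).Adj u x)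
    (huy : (circClique p q).Adj u y) (hvx : (circClique p q).Adj v x)
    (hvy : (circClique p q).Adj v y) : (u - v).valMinAbs.natAbs ≤ p - 3 * q := by
  rw [← ZMod.natAbs_valMinAbs_neg, neg_sub]
  rw [← adj_sub_right u] at hxy hux huy hvx hvy
  rw [sub_self] at hux huy
  exact natAbs_valMinAbs_le_of_diamond_zero hq hp hxy hux huy hvx hvy

end circClique

lemma moserSpindle_adj_iff {i j : Fin 7} :
    moserSpindle.Adj i j ↔
      s(i, j) ∈ ({s(0, 1), s(0, 2), s(0, 5), s(0, 6), s(1, 2), s(1, 3),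
        s(2, 3), s(3, 4), s(4, 5), s(4, 6), s(5, 6)} : Finset (Sym2 (Fin 7))) ∧ i ≠ j := by
  simp only [moserSpindle, fromEdgeSet_adj, ← Finset.mem_coe, Finset.coe_insert,
    Finset.coe_singleton]

instance : DecidableRel moserSpindle.Adj := fun _ _ => decidable_of_iff _ moserSpindle_adj_iff.symm

lemma moserSpindle_edgeSet_ncard : moserSpindle.edgeSet.ncard = 11 := by
  rw [← coe_edgeFinset, Set.ncard_coe_finset]
  decide

lemma moserSpindle_hasCircColoring_seven_two : HasCircColoring moserSpindle 7 2 := by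
  refine ⟨⟨fun i => (2 * i.val : ZMod 7), fun {i j} => ?_⟩⟩
  rw [circClique.adj_iff two_pos]
  revert i j
  decide

lemma moserSpindle_not_hasCircColoring {p q : ℕ} [NeZero p] (hq : 0 < q) (hp : 2 * p < 7 * q) :
    ¬ HasCircColoring moserSpindle p q := by
  rintro ⟨f⟩
  have hp4 : p < 4 * q := by omega
  have h30 := circClique.natAbs_valMinAbs_sub_le_of_diamond (u := f 3) (v := f 0) (x := f 1)
    (y := f 2) hq hp4 (f.map_adj (by decide)) (f.map_adj (by decide)) (f.map_adj (by decide))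
    (f.map_adj (by decide)) (f.map_adj (by decide))
  have h04 := circClique.natAbs_valMinAbs_sub_le_of_diamond (u := f 0) (v := f 4) (x := f 5)
    (y := f 6) hq hp4 (f.map_adj (by decide)) (f.map_adj (by decide)) (f.map_adj (by decide))
    (f.map_adj (by decide)) (f.map_adj (by decide))
  have h34 := (circClique.adj_iff hq).1 (f.map_adj (by decide : moserSpindle.Adj 3 4))
  have := ZMod.natAbs_valMinAbs_sub_le (f 3) (f 0) (f 4)
  omega

/-- The Moser spindle has 7 vertices, 11 edges, a (7,2)-colouring, and no
`(p,q)`-colouring whenever `2q ≤ p` and `2p < 7q`; hence its circular chromatic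
number is `7/2`. -/
theorem stmt_4 :
    Fintype.card (Fin 7) = 7 ∧
    moserSpindle.edgeSet.ncard = 11 ∧
    HasCircColoring moserSpindle 7 2 ∧
    ∀ p q : ℕ, 0 < q → 2 * q ≤ p → 2 * p < 7 * q → ¬ HasCircColoring moserSpindle p q := by
  refine ⟨Fintype.card_fin 7, moserSpindle_edgeSet_ncard, moserSpindle_hasCircColoring_seven_two,
    fun p q hq hpq hp => ?_⟩
  have : NeZero p := ⟨by omega⟩
  exact moserSpindle_not_hasCircColoring hq hp
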